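/- On the elliptic curve E : y^2 + xy = x^3 + 4040549489437705068551042·x^2 + 39096673111815206065773237234587256582331296000·x over Q, the point (0,0) is a rational point of order exactly 2, and x = -3613294426098135199878600 is the x-coordinate of a rational point of infinite order on E. -/

import Mathlib

def E : WeierstrassCurve.Affine ℚ :=
  ⟨1, 4040549489437705068551042, 0,
    39096673111815206065773237234587256582331296000, 0⟩

/-!
The map `O ↦ 1`, `(0, 0) ↦ a₄`, `(x, y) ↦ x` is a homomorphism from `E(ℚ)` to `ℚˣ / ℚˣ²` (the
2-isogeny descent map): the `x`-coordinates of three collinear points on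
`y² + a₁xy = x³ + a₂x² + a₄x` multiply to the square of the intercept of their line.
Let `P = (x, y)` with `x < 0` have finite order `k`. If `k` is odd, `x ^ k` is a square. If
`k = 2m`, then `m • P` is a rational 2-torsion point, hence `(0, 0)` because the discriminant
of the quadratic cutting out the other 2-torsion points is not a square; so `a₄ * x ^ m` is a
square, which is impossible since `a₄ > 0` is not a square.
-/

lemma isSquare_ite_mul_ite_mul_ite {K : Type*} [CommRing K] [NoZeroDivisors K] [DecidableEq K]
    {a x₁ x₂ x₃ ν : K} (ha : a ≠ 0) (hprod : x₁ * x₂ * x₃ = ν ^ 2)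
    (hsum : ν = 0 → x₁ * x₂ + x₁ * x₃ + x₂ * x₃ = a) :
    IsSquare ((if x₁ = 0 then a else x₁) * (if x₂ = 0 then a else x₂) *
      (if x₃ = 0 then a else x₃)) := by
  by_cases hν : ν = 0
  · have hs := hsum hν
    rw [hν, zero_pow two_ne_zero, mul_eq_zero, mul_eq_zero] at hprod
    -- exactly one `xᵢ` vanishes (two would force `a = 0`), and the other two multiply to `a`
    refine ⟨a, ?_⟩
    revert ha
    rcases hprod with (h | h) | h <;> split_ifs <;> grind
  · have h : x₁ * x₂ * x₃ ≠ 0 := hprod ▸ pow_ne_zero 2 hν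
    simp only [mul_ne_zero_iff] at h
    rw [if_neg h.1.1, if_neg h.1.2, if_neg h.2, hprod]
    exact IsSquare.sq ν

namespace WeierstrassCurve.Affine

section

variable {F : Type*} [Field F] [DecidableEq F] {W : Affine F}

lemma addX_vieta (h₃ : W.a₃ = 0) (h₆ : W.a₆ = 0) {x₁ x₂ y₁ y₂ : F} (h₁ : W.Equation x₁ y₁)
    (h₂ : W.Equation x₂ y₂) (hxy : ¬(x₁ = x₂ ∧ y₁ = W.negY x₂ y₂)) :
    x₁ * x₂ * W.addX x₁ x₂ (W.slope x₁ x₂ y₁ y₂) =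
        (y₁ - W.slope x₁ x₂ y₁ y₂ * x₁) ^ 2 ∧
      x₁ * x₂ + x₁ * W.addX x₁ x₂ (W.slope x₁ x₂ y₁ y₂) +
          x₂ * W.addX x₁ x₂ (W.slope x₁ x₂ y₁ y₂) =
        W.a₄ - (2 * W.slope x₁ x₂ y₁ y₂ + W.a₁) * (y₁ - W.slope x₁ x₂ y₁ y₂ * x₁) := by
  have h := addPolynomial_slope h₁ h₂ hxy
  rw [addPolynomial_eq, neg_inj, Cubic.prod_X_sub_C_eq, Cubic.toPoly_injective,
    Cubic.mk.injEq] at h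
  obtain ⟨-, -, hc, hd⟩ := h
  rw [h₃] at hc
  rw [h₃, h₆] at hd
  constructor
  · linear_combination hd
  · linear_combination -hc

namespace Point

/-- The 2-isogeny descent map attached to the 2-torsion point `(0, 0)`; its value `a₄` at
`(0, 0)` is forced by `x(P) * x(P + (0, 0)) = a₄`. -/
noncomputable def twoDescent : W.Point → F
  | .zero => 1
  | .some x _ _ => if x = 0 then W.a₄ else x

@[simp] lemma twoDescent_zero : twoDescent (0 : W.Point) = 1 := rfl

lemma twoDescent_some {x y : F} (h : W.Nonsingular x y) :
    twoDescent (some _ _ h) = if x = 0 then W.a₄ else x := rfl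

lemma twoDescent_ne_zero (h₄ : W.a₄ ≠ 0) (P : W.Point) : twoDescent P ≠ 0 := by
  rcases P with _ | ⟨x, y, h⟩
  · exact one_ne_zero
  · rw [twoDescent_some]
    split_ifs with hx
    exacts [h₄, hx]

lemma isSquare_twoDescent_mul_twoDescent_mul_twoDescent_add (h₃ : W.a₃ = 0) (h₆ : W.a₆ = 0)
    (h₄ : W.a₄ ≠ 0) (P Q : W.Point) :
    IsSquare (twoDescent P * twoDescent Q * twoDescent (P + Q)) := by
  rcases P with _ | ⟨x₁, y₁, h₁⟩
  · rw [← zero_def, zero_add, twoDescent_zero, one_mul]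
    exact IsSquare.mul_self _
  rcases Q with _ | ⟨x₂, y₂, h₂⟩
  · rw [← zero_def, add_zero, twoDescent_zero, mul_one]
    exact IsSquare.mul_self _
  by_cases hxy : x₁ = x₂ ∧ y₁ = W.negY x₂ y₂
  · obtain ⟨rfl, hy⟩ := hxy
    rw [add_of_Y_eq rfl hy, twoDescent_zero, mul_one, twoDescent_some, twoDescent_some]
    exact IsSquare.mul_self _
  · obtain ⟨hprod, hsum⟩ := addX_vieta h₃ h₆ h₁.1 h₂.1 hxy
    rw [add_some hxy, twoDescent_some, twoDescent_some, twoDescent_some]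
    exact isSquare_ite_mul_ite_mul_ite h₄ hprod fun hν => by rw [hsum, hν]; ring

lemma isSquare_twoDescent_nsmul_mul_pow (h₃ : W.a₃ = 0) (h₆ : W.a₆ = 0) (h₄ : W.a₄ ≠ 0)
    (P : W.Point) (n : ℕ) : IsSquare (twoDescent (n • P) * twoDescent P ^ n) := by
  induction n with
  | zero => simp
  | succ n ih =>
    rw [succ_nsmul]
    set t := twoDescent (n • P)
    have ht : t ≠ 0 := twoDescent_ne_zero h₄ (n • P)
    have key : twoDescent (n • P + P) * twoDescent P ^ (n + 1) =
        t * twoDescent P * twoDescent (n • P + P) * (t * twoDescent P ^ n) / (t * t) := by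
      field_simp
      ring
    rw [key]
    exact ((isSquare_twoDescent_mul_twoDescent_mul_twoDescent_add h₃ h₆ h₄ (n • P) P).mul
      ih).div (IsSquare.mul_self t)

lemma twoDescent_eq_a₄_of_add_self_eq_zero (h₃ : W.a₃ = 0) (h₆ : W.a₆ = 0)
    (hdisc : ¬IsSquare (discrim 4 (W.a₁ ^ 2 + 4 * W.a₂) (4 * W.a₄))) {Q : W.Point}
    (hQ : Q ≠ 0) (hQQ : Q + Q = 0) : twoDescent Q = W.a₄ := by
  rcases Q with _ | ⟨x, y, h⟩
  · exact absurd rfl hQ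
  have hy : y = W.negY x y := by
    have hQ := add_eq_zero_iff_eq_neg.mp hQQ
    rw [neg_some, some.injEq] at hQ
    exact hQ.2
  rw [negY, h₃] at hy
  have heq := (W.equation_iff x y).mp h.1
  rw [h₃, h₆] at heq
  have hcubic : x * (4 * (x * x) + (W.a₁ ^ 2 + 4 * W.a₂) * x + 4 * W.a₄) = 0 := by
    linear_combination (2 * y + W.a₁ * x) * hy - 4 * heq
  have hx : x = 0 := by
    by_contra hx
    exact hdisc ⟨_, (discrim_eq_sq_of_quadratic_eq_zero
      ((mul_eq_zero.mp hcubic).resolve_left hx)).trans (sq _)⟩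
  rw [twoDescent_some, if_pos hx]

lemma addOrderOf_some_zero_zero (h₃ : W.a₃ = 0) (h : W.Nonsingular 0 0) :
    addOrderOf (some _ _ h) = 2 := by
  apply addOrderOf_eq_prime
  · rw [two_smul]
    exact add_self_of_Y_eq (by rw [negY, h₃]; ring)
  · exact some_ne_zero h

end Point

end

theorem Point.not_isOfFinAddOrder_some_of_x_neg {F : Type*} [Field F] [LinearOrder F]
    [IsStrictOrderedRing F] {W : Affine F} (h₃ : W.a₃ = 0) (h₆ : W.a₆ = 0) (ha₄ : 0 < W.a₄)
    (hsq : ¬IsSquare W.a₄) (hdisc : ¬IsSquare (discrim 4 (W.a₁ ^ 2 + 4 * W.a₂) (4 * W.a₄)))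
    {x y : F} (h : W.Nonsingular x y) (hx : x < 0) : ¬IsOfFinAddOrder (some _ _ h) := by
  intro hfin
  set P := some _ _ h
  have hP : twoDescent P = x := by rw [twoDescent_some, if_neg hx.ne]
  obtain ⟨m, hm⟩ | hodd := Nat.even_or_odd (addOrderOf P)
  · have hm0 : 0 < m := by have := hfin.addOrderOf_pos; omega
    have hQ : m • P ≠ 0 := nsmul_ne_zero_of_lt_addOrderOf hm0.ne' (by omega)
    have hQQ : m • P + m • P = 0 := by rw [← add_nsmul, ← hm, addOrderOf_nsmul_eq_zero]
    have hmsq := isSquare_twoDescent_nsmul_mul_pow h₃ h₆ ha₄.ne' P m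
    rw [twoDescent_eq_a₄_of_add_self_eq_zero h₃ h₆ hdisc hQ hQQ, hP] at hmsq
    obtain hme | hmo := Nat.even_or_odd m
    · exact hsq (by simpa [hx.ne] using hmsq.div (hme.isSquare_pow x))
    · exact (mul_neg_of_pos_of_neg ha₄ (hmo.pow_neg hx)).not_ge hmsq.nonneg
  · have hksq := isSquare_twoDescent_nsmul_mul_pow h₃ h₆ ha₄.ne' P (addOrderOf P)
    rw [addOrderOf_nsmul_eq_zero, twoDescent_zero, one_mul, hP] at hksq
    exact (hodd.pow_neg hx).not_ge hksq.nonneg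

end WeierstrassCurve.Affine

open WeierstrassCurve.Affine WeierstrassCurve.Affine.Point in
/-- On the rank-19 smallest-conductor curve with torsion `ℤ/2ℤ`, the point `(0,0)` has
order exactly 2, and `x = -3613294426098135199878600` is the `x`-coordinate of a rational
point of infinite order. -/
theorem order_two_and_infinite_order_point :
    (∃ h : E.Nonsingular 0 0, addOrderOf (WeierstrassCurve.Affine.Point.some _ _ h) = 2) ∧
    ∃ y : ℚ, ∃ h : E.Nonsingular (-3613294426098135199878600) y,
      ∀ n : ℕ, 0 < n → n • WeierstrassCurve.Affine.Point.some _ _ h ≠ 0 := by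
  refine ⟨⟨nonsingular_zero.mpr ⟨rfl, .inr (by norm_num [E])⟩, addOrderOf_some_zero_zero rfl _⟩,
    2331722569667057369316488273387345400, ?_⟩
  have hP : E.Nonsingular (-3613294426098135199878600) 2331722569667057369316488273387345400 := by
    rw [nonsingular_iff', equation_iff]
    norm_num [E]
  refine ⟨hP, fun n hn hnP => not_isOfFinAddOrder_some_of_x_neg rfl rfl (by norm_num [E])
    (by norm_num [E]) (by norm_num [E, discrim]) hP (by norm_num)
    (isOfFinAddOrder_iff_nsmul_eq_zero.mpr ⟨n, hn, hnP⟩)⟩
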